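/- Let Z(y) = 1 - Σ_{n≥1} y^n v_n be a formal power series with coefficients in a unital associative ℂ-algebra A (v_n ∈ A), viewed in A[[x,y]]. Then the generating function R(x,y) = Σ_{m≥1} Σ_{n≥0} x^n y^m R^{n+m}_m(v) + 1/(1-x), where R^l_m(v) = Σ_{k=1}^m C(l-m+k, k) P^{(k)}_m(v), satisfies (Z(y) - x)·R(x,y) = 1, i.e., R(x,y) is the resolvent of Z(y). -/

import Mathlib

/-- The noncommutative symmetric polynomial
`P_m^{(k)}(v) = Σ_{j_1+···+j_k = m, j_i ≥ 1} v_{j_1}···v_{j_k}`. -/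
noncomputable def Pp {A : Type*} [Ring A] (v : ℕ → A) (k m : ℕ) : A :=
  ∑ j : Fin k → Fin (m + 1),
    if (∀ i, 1 ≤ (j i : ℕ)) ∧ (∑ i, (j i : ℕ)) = m then
      (List.ofFn fun i => v ((j i : ℕ))).prod
    else 0

/-- `R^l_m(v) = Σ_{k=1}^m C(l-m+k, k) P^{(k)}_m(v)` (with `C = 0` when the
top entry is less than the bottom one, as encoded by `Nat.choose` and
truncated subtraction). -/
noncomputable def Rp {A : Type*} [Ring A] (v : ℕ → A) (l m : ℕ) : A :=
  ∑ k ∈ Finset.Icc 1 m, ((l + k - m).choose k) • Pp v k m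

/-- `Z(y) = 1 - Σ_{n≥1} y^n v_n`, as a power series in `y` with coefficients in `A`. -/
noncomputable def Zy {A : Type*} [Ring A] (v : ℕ → A) : PowerSeries A :=
  PowerSeries.mk fun m => if m = 0 then 1 else -(v m)

/-- The generating function `R(x,y) = Σ_{m≥1} Σ_{n≥0} x^n y^m R^{n+m}_m(v) + 1/(1-x)`,
viewed as an element of `A[[y]][[x]]` (outer variable `x`, inner variable `y`). -/
noncomputable def Rser {A : Type*} [Ring A] (v : ℕ → A) : PowerSeries (PowerSeries A) :=
  PowerSeries.mk fun n => PowerSeries.mk fun m => if m = 0 then 1 else Rp v (n + m) m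

/-! Write `Z(y) = 1 - V(y)` with `V(y) = ∑_{n ≥ 1} yⁿ vₙ`. The coefficients of `V(y)ᵏ` are the
`P^{(k)}_m(v)`, so the coefficient of `xⁿ` in `R(x,y)` is `∑ₖ C(n+k, k) V(y)ᵏ`, formally
`Z(y)^{-(n+1)}`. Pascal's rule `C(n+1+k, k) = C(n+k, k) + C(n+k, k-1)` turns this into
`Z · ∑ₖ C(n+1+k, k) Vᵏ = ∑ₖ C(n+k, k) Vᵏ` and `Z · ∑ₖ Vᵏ = 1`, which is `(Z(y) - x) R(x,y) = 1`
read off coefficient by coefficient in `x`. -/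

open PowerSeries Finset

section
variable {A : Type*} [Ring A] (v : ℕ → A)

noncomputable def Vy : PowerSeries A :=
  PowerSeries.mk fun m => if m = 0 then 0 else v m

lemma Zy_eq_one_sub_Vy : Zy v = 1 - Vy v := by
  ext m
  by_cases hm : m = 0 <;> simp [Zy, Vy, coeff_one, hm]

lemma Pp_zero_left (m : ℕ) : Pp v 0 m = if m = 0 then 1 else 0 := by
  rw [Pp, univ_unique, sum_singleton]
  simp [eq_comm]

lemma Pp_eq_zero_of_lt {k m : ℕ} (h : m < k) : Pp v k m = 0 := by
  refine sum_eq_zero fun j _ => if_neg ?_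
  rintro ⟨hpos, hsum⟩
  have : ∑ _i : Fin k, 1 ≤ ∑ i, (j i : ℕ) := sum_le_sum fun i _ => hpos i
  simp only [sum_const, card_univ, Fintype.card_fin, smul_eq_mul, mul_one] at this
  omega

lemma Pp_eq_sum_of_le (k : ℕ) {m M : ℕ} (h : m ≤ M) :
    Pp v k m = ∑ j : Fin k → Fin (M + 1),
      if (∀ i, 1 ≤ (j i : ℕ)) ∧ ∑ i, (j i : ℕ) = m then
        (List.ofFn fun i => v (j i : ℕ)).prod
      else 0 := by
  refine sum_bij_ne_zero (fun j _ _ => Fin.castLE (by omega) ∘ j) (by simp)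
    (fun j₁ _ _ j₂ _ _ h => funext fun i => Fin.castLE_injective _ (congrFun h i)) ?_ (by simp)
  intro J _ hJ
  have hsum : ∑ i, (J i : ℕ) = m := (ite_ne_right_iff.mp hJ).1.2
  have hle (i : Fin k) : (J i : ℕ) ≤ m := by
    rw [← hsum]
    exact single_le_sum (f := fun i => (J i : ℕ)) (fun _ _ => Nat.zero_le _) (mem_univ i)
  exact ⟨fun i => ⟨J i, Nat.lt_succ_of_le (hle i)⟩, mem_univ _, by simpa using hJ, by ext; simp⟩

lemma mk_Pp_succ (k : ℕ) : PowerSeries.mk (Pp v (k + 1)) = Vy v * PowerSeries.mk (Pp v k) := by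
  ext m
  have split (a : Fin (m + 1)) (t : Fin k → Fin (m + 1)) :
      let j : Fin (k + 1) → Fin (m + 1) := Fin.cons a t
      (if (∀ i, 1 ≤ (j i : ℕ)) ∧ ∑ i, (j i : ℕ) = m then (List.ofFn fun i => v (j i : ℕ)).prod
        else 0) =
      (if (a : ℕ) = 0 then 0 else v a) *
        if (∀ i, 1 ≤ (t i : ℕ)) ∧ ∑ i, (t i : ℕ) = m - a then
          (List.ofFn fun i => v (t i : ℕ)).prod else 0 := by
    intro j
    have ha := a.is_lt
    simp only [j, Fin.forall_fin_succ, Fin.cons_zero, Fin.cons_succ, Fin.sum_univ_succ,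
      List.ofFn_succ, List.prod_cons]
    split_ifs <;> simp_all
    omega
  rw [coeff_mk]
  calc Pp v (k + 1) m
      = ∑ a : Fin (m + 1), (if (a : ℕ) = 0 then 0 else v a) * Pp v k (m - a) := by
        rw [Pp, ← (Fin.consEquiv fun _ => Fin (m + 1)).sum_comp, Fintype.sum_prod_type]
        refine sum_congr rfl fun a _ => ?_
        rw [Pp_eq_sum_of_le v k (Nat.sub_le m a), mul_sum]
        exact sum_congr rfl fun t _ => split a t
    _ = ∑ p ∈ antidiagonal m, coeff p.1 (Vy v) * coeff p.2 (PowerSeries.mk (Pp v k)) := by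
        rw [Nat.sum_antidiagonal_eq_sum_range_succ_mk, ← Fin.sum_univ_eq_sum_range]
        simp [Vy]
    _ = _ := (coeff_mul _ _ _).symm

/-- `∑ₖ c k • V(y) ^ k`: the coefficients of `V(y) ^ k` are the `Pp v k` (`mk_Pp_succ`), which
vanish below degree `k`, so the coefficient of `y ^ m` is a finite sum. -/
noncomputable def evalVy (c : ℕ → ℕ) : PowerSeries A :=
  PowerSeries.mk fun m => ∑ k ∈ range (m + 1), c k • Pp v k m

lemma coeff_evalVy_of_le (c : ℕ → ℕ) {m N : ℕ} (h : m ≤ N) :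
    coeff m (evalVy v c) = ∑ k ∈ range (N + 1), c k • Pp v k m := by
  rw [evalVy, coeff_mk]
  refine sum_subset (range_subset_range.mpr (by omega)) fun k _ hk => ?_
  rw [Pp_eq_zero_of_lt v (by simpa using hk), smul_zero]

lemma evalVy_add (c d : ℕ → ℕ) : evalVy v (c + d) = evalVy v c + evalVy v d := by
  ext m
  simp [evalVy, add_smul, sum_add_distrib]

lemma coeff_Vy_mul_evalVy (c : ℕ → ℕ) (m : ℕ) :
    coeff m (Vy v * evalVy v c) = ∑ k ∈ range (m + 1), c k • Pp v (k + 1) m := by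
  calc coeff m (Vy v * evalVy v c)
      = ∑ p ∈ antidiagonal m, ∑ k ∈ range (m + 1), c k • (coeff p.1 (Vy v) * Pp v k p.2) := by
        rw [coeff_mul]
        refine sum_congr rfl fun p hp => ?_
        rw [coeff_evalVy_of_le v c (HasAntidiagonal.antidiagonal.snd_le hp), mul_sum]
        simp only [mul_smul_comm]
    _ = ∑ k ∈ range (m + 1), c k • Pp v (k + 1) m := by
        rw [sum_comm]
        refine sum_congr rfl fun k _ => ?_
        rw [← smul_sum, ← coeff_mk m (Pp v (k + 1)), mk_Pp_succ, coeff_mul]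
        simp only [coeff_mk]

lemma evalVy_eq_add_Vy_mul (c : ℕ → ℕ) :
    evalVy v c = c 0 • 1 + Vy v * evalVy v (fun k => c (k + 1)) := by
  ext m
  rw [map_add, coeff_Vy_mul_evalVy, sum_range_succ, Pp_eq_zero_of_lt v (Nat.lt_succ_self m),
    smul_zero, add_zero, evalVy, coeff_mk, sum_range_succ', map_nsmul, coeff_one, Pp_zero_left,
    add_comm]

lemma Zy_mul_evalVy_one : Zy v * evalVy v (fun _ => 1) = 1 := by
  rw [Zy_eq_one_sub_Vy, sub_mul, one_mul, sub_eq_iff_eq_add]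
  exact (evalVy_eq_add_Vy_mul v _).trans (by rw [one_smul, add_comm])

lemma Zy_mul_evalVy_choose (n : ℕ) :
    Zy v * evalVy v (fun k => (n + 1 + k).choose k) = evalVy v (fun k => (n + k).choose k) := by
  have pascal : (fun k => (n + 1 + (k + 1)).choose (k + 1)) =
      (fun k => (n + (k + 1)).choose (k + 1)) + fun k => (n + 1 + k).choose k := by
    ext k
    rw [Pi.add_apply, show n + 1 + (k + 1) = n + 1 + k + 1 by omega, Nat.choose_succ_succ',
      show n + (k + 1) = n + 1 + k by omega]
    exact add_comm _ _
  have recursion : evalVy v (fun k => (n + 1 + k).choose k) =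
      evalVy v (fun k => (n + k).choose k) + Vy v * evalVy v (fun k => (n + 1 + k).choose k) := by
    conv_lhs => rw [evalVy_eq_add_Vy_mul, pascal, evalVy_add, mul_add]
    conv_rhs => rw [evalVy_eq_add_Vy_mul v fun k => (n + k).choose k]
    simp only [add_zero, Nat.choose_zero_right]
    abel
  rw [Zy_eq_one_sub_Vy, sub_mul, one_mul, sub_eq_iff_eq_add]
  exact recursion

lemma coeff_Rser (n : ℕ) : coeff n (Rser v) = evalVy v (fun k => (n + k).choose k) := by
  ext m
  rw [Rser, coeff_mk, coeff_mk, evalVy, coeff_mk]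
  rcases m with _ | m
  · simp [Pp_zero_left]
  · rw [if_neg m.succ_ne_zero, Rp, sum_range_succ', Pp_zero_left, if_neg m.succ_ne_zero,
      smul_zero, add_zero, ← Ico_add_one_right_eq_Icc, sum_Ico_eq_sum_range]
    refine sum_congr rfl fun k _ => ?_
    rw [show n + (m + 1) + (1 + k) - (m + 1) = n + (k + 1) by omega, add_comm 1 k]

end

theorem resolvent_R_general {A : Type*} [Ring A] (v : ℕ → A) :
    (PowerSeries.C (Zy v) - PowerSeries.X) * Rser v = 1 := by
  ext n
  rw [sub_mul, map_sub, coeff_C_mul, coeff_Rser, coeff_one]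
  rcases n with _ | n
  · simp [Zy_mul_evalVy_one]
  · rw [coeff_succ_X_mul, coeff_Rser, Zy_mul_evalVy_choose]
    simp

/-- The generating function `R(x,y)` is the resolvent of `Z(y)`:
`(Z(y) - x) · R(x,y) = 1` in `A[[x,y]]`. -/
theorem resolvent_R {A : Type*} [Ring A] [Algebra ℂ A] (v : ℕ → A) :
    (PowerSeries.C (Zy v) - PowerSeries.X) * Rser v = 1 :=
  resolvent_R_general v
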